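/- Let C ∈ C^{N×N} be Hermitian and 1 ≤ M ≤ N. Then max{ tr(R C) : R Hermitian, 0 ⪯ R ⪯ I, tr(R) = M } = Σ_{i=1}^{M} μ_i(C), i.e., relaxing the rank-M projection constraint to its convex hull does not change the optimal value of the linear objective. -/

import Mathlib

open Matrix
open scoped ComplexOrder

lemma card_filter_lt_fin {N M : ℕ} (hMN : M ≤ N) :
    (Finset.univ.filter (fun i : Fin N => (i : ℕ) < M)).card = M := by
  have h : Finset.univ.filter (fun i : Fin N => (i : ℕ) < M)
      = Finset.map (Fin.castLEEmb hMN) Finset.univ := by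
    ext j
    simp only [Finset.mem_filter, Finset.mem_univ, true_and, Finset.mem_map,
      Fin.castLEEmb_apply]
    constructor
    · intro hj
      exact ⟨⟨(j : ℕ), hj⟩, rfl⟩
    · rintro ⟨i, rfl⟩
      exact i.2
  rw [h, Finset.card_map, Finset.card_univ, Fintype.card_fin]

lemma key_sum {N M : ℕ} (hM : 1 ≤ M) (hMN : M ≤ N) (μ s : Fin N → ℝ)
    (hμ : Antitone μ) (hs0 : ∀ i, 0 ≤ s i) (hs1 : ∀ i, s i ≤ 1)
    (hsum : ∑ i, s i = (M : ℝ)) :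
    ∑ i, μ i * s i ≤ ∑ i ∈ Finset.univ.filter (fun i : Fin N => (i : ℕ) < M), μ i := by
  set T := Finset.univ.filter (fun i : Fin N => (i : ℕ) < M) with hT
  have hcard : T.card = M := card_filter_lt_fin hMN
  have hMN' : M - 1 < N := by omega
  set c : ℝ := μ ⟨M - 1, hMN'⟩ with hc
  have hmemT : ∀ i : Fin N, i ∈ T ↔ (i : ℕ) < M := by
    intro i; simp [hT]
  have h1 : ∀ i ∈ T, c ≤ μ i := by
    intro i hi
    apply hμ
    have : (i : ℕ) < M := (hmemT i).1 hi
    have hval : ((⟨M - 1, hMN'⟩ : Fin N) : ℕ) = M - 1 := rfl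
    rw [Fin.le_def, hval]
    omega
  have h2 : ∀ i ∈ Tᶜ, μ i ≤ c := by
    intro i hi
    apply hμ
    have : ¬ (i : ℕ) < M := by
      intro h; exact (Finset.mem_compl.1 hi) ((hmemT i).2 h)
    have hval : ((⟨M - 1, hMN'⟩ : Fin N) : ℕ) = M - 1 := rfl
    rw [Fin.le_def, hval]
    omega
  have key : ∑ i, (μ i - c) * s i ≤ ∑ i ∈ T, (μ i - c) := by
    rw [← Finset.sum_add_sum_compl T]
    have hA : ∑ i ∈ T, (μ i - c) * s i ≤ ∑ i ∈ T, (μ i - c) := by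
      apply Finset.sum_le_sum
      intro i hi
      have := h1 i hi
      nlinarith [hs1 i, hs0 i]
    have hB : ∑ i ∈ Tᶜ, (μ i - c) * s i ≤ 0 := by
      apply Finset.sum_nonpos
      intro i hi
      exact mul_nonpos_of_nonpos_of_nonneg (by linarith [h2 i hi]) (hs0 i)
    linarith
  have e1 : ∑ i, μ i * s i = (∑ i, (μ i - c) * s i) + c * M := by
    rw [← hsum, Finset.mul_sum, ← Finset.sum_add_distrib]
    congr 1; funext i; ring
  have e2 : ∑ i ∈ T, μ i = (∑ i ∈ T, (μ i - c)) + c * M := by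
    have : ∑ i ∈ T, (μ i - c) = (∑ i ∈ T, μ i) - T.card • c := by
      rw [Finset.sum_sub_distrib, Finset.sum_const]
    rw [this, hcard]
    ring
  linarith

/-- The maximum of `tr(R C)` over Hermitian `R` with `0 ⪯ R ⪯ I` and `tr R = M`
equals the sum of the `M` largest eigenvalues of the Hermitian matrix `C`. -/
theorem stmt_11 {N M : ℕ} (hM : 1 ≤ M) (hMN : M ≤ N)
    (C : Matrix (Fin N) (Fin N) ℂ) (hC : C.IsHermitian)
    (μ : Fin N → ℝ) (hμ : Antitone μ)
    (σ : Equiv.Perm (Fin N)) (hμσ : μ = hC.eigenvalues ∘ σ) :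
    IsGreatest {x : ℝ | ∃ R : Matrix (Fin N) (Fin N) ℂ,
        R.PosSemidef ∧ ((1 : Matrix (Fin N) (Fin N) ℂ) - R).PosSemidef ∧
        Matrix.trace R = (M : ℂ) ∧ x = (Matrix.trace (R * C)).re}
      (∑ i ∈ Finset.univ.filter (fun i : Fin N => (i : ℕ) < M), μ i) := by
  set Um : Matrix (Fin N) (Fin N) ℂ := (hC.eigenvectorUnitary : Matrix (Fin N) (Fin N) ℂ)
    with hUm
  have hsU : star Um * Um = 1 := hC.eigenvectorUnitary.2.1
  have hUs : Um * star Um = 1 := hC.eigenvectorUnitary.2.2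
  have hspec : C = Um * diagonal (RCLike.ofReal ∘ hC.eigenvalues) * star Um :=
    hC.spectral_theorem
  have cancel : ∀ X : Matrix (Fin N) (Fin N) ℂ, star Um * (Um * X) = X := by
    intro X; rw [← mul_assoc, hsU, one_mul]
  have tr_conj : ∀ A : Matrix (Fin N) (Fin N) ℂ,
      Matrix.trace (Um * A * star Um) = Matrix.trace A := by
    intro A
    rw [trace_mul_cycle, hsU, one_mul]
  have tr_conj' : ∀ A : Matrix (Fin N) (Fin N) ℂ,
      Matrix.trace (star Um * A * Um) = Matrix.trace A := by
    intro A
    rw [trace_mul_cycle, hUs, one_mul]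
  constructor
  · -- membership: R = Um * diagonal d * Umᴴ where d selects the top-M eigenvalues
    set d : Fin N → ℂ := fun j => if ((σ.symm j : Fin N) : ℕ) < M then 1 else 0 with hd
    have hd0 : 0 ≤ d := by
      intro j
      simp only [hd, Pi.zero_apply]
      split_ifs
      · exact zero_le_one
      · exact le_refl 0
    have hd1 : ∀ j, d j ≤ 1 := by
      intro j
      simp only [hd]
      split_ifs
      · exact le_refl 1
      · exact zero_le_one
    refine ⟨Um * diagonal d * star Um, ?_, ?_, ?_, ?_⟩
    · rw [Matrix.star_eq_conjTranspose]
      exact (Matrix.PosSemidef.diagonal hd0).mul_mul_conjTranspose_same Um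
    · have : (1 : Matrix (Fin N) (Fin N) ℂ) - Um * diagonal d * star Um
          = Um * diagonal (fun j => 1 - d j) * star Um := by
        have : diagonal (fun j => (1 : ℂ) - d j) = 1 - diagonal d := by
          rw [← diagonal_one, diagonal_sub]
        rw [this, Matrix.mul_sub, Matrix.sub_mul, Matrix.mul_one, hUs]
      rw [this, Matrix.star_eq_conjTranspose]
      refine (Matrix.PosSemidef.diagonal ?_).mul_mul_conjTranspose_same Um
      intro j
      simpa using hd1 j
    · rw [tr_conj, trace_diagonal]
      have := Equiv.sum_comp σ d
      rw [← this]
      simp only [hd, Equiv.symm_apply_apply]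
      rw [← Finset.sum_filter]
      simp [card_filter_lt_fin hMN]
    · have hRC : Um * diagonal d * star Um * (Um * diagonal (RCLike.ofReal ∘ hC.eigenvalues) * star Um)
          = Um * (diagonal d * diagonal (RCLike.ofReal ∘ hC.eigenvalues)) * star Um := by
        simp only [Matrix.mul_assoc]
        rw [cancel]
      have hdiag : diagonal d * diagonal (RCLike.ofReal ∘ hC.eigenvalues)
          = diagonal (fun j => d j * (hC.eigenvalues j : ℂ)) := by
        rw [diagonal_mul_diagonal]
        rfl
      rw [hspec, hRC, hdiag, tr_conj, trace_diagonal]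
      rw [← Equiv.sum_comp σ (fun j => d j * (hC.eigenvalues j : ℂ))]
      simp only [hd, Equiv.symm_apply_apply, ite_mul, one_mul, zero_mul]
      rw [← Finset.sum_filter, hμσ, Complex.re_sum]
      simp
  · -- upper bound
    rintro x ⟨R, hR, hIR, htr, hx⟩
    set S : Matrix (Fin N) (Fin N) ℂ := star Um * R * Um with hS
    have hSpsd : S.PosSemidef := by
      rw [hS, Matrix.star_eq_conjTranspose]
      exact hR.conjTranspose_mul_mul_same Um
    have hISpsd : ((1 : Matrix (Fin N) (Fin N) ℂ) - S).PosSemidef := by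
      have : (1 : Matrix (Fin N) (Fin N) ℂ) - S
          = star Um * ((1 : Matrix (Fin N) (Fin N) ℂ) - R) * Um := by
        rw [Matrix.mul_sub, Matrix.sub_mul, Matrix.mul_one, hsU, hS]
      rw [this, Matrix.star_eq_conjTranspose]
      exact hIR.conjTranspose_mul_mul_same Um
    have diag_nonneg : ∀ (A : Matrix (Fin N) (Fin N) ℂ), A.PosSemidef → ∀ j, 0 ≤ A j j := by
      intro A hA j
      exact hA.diag_nonneg
    have hdS0 : ∀ j, 0 ≤ S j j := diag_nonneg S hSpsd
    have hdS1 : ∀ j, S j j ≤ 1 := by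
      intro j
      have := diag_nonneg _ hISpsd j
      simp only [Matrix.sub_apply, Matrix.one_apply_eq] at this
      exact sub_nonneg.1 this
    have htrS : ∑ j, S j j = (M : ℂ) := by
      have : Matrix.trace S = Matrix.trace R := tr_conj' R
      rw [← htr, ← this]
      rfl
    -- trace (R * C) = ∑ j, S j j * eigenvalue j
    have e : star Um * (R * C) * Um = S * diagonal (RCLike.ofReal ∘ hC.eigenvalues) := by
      conv_lhs => rw [hspec]
      rw [hS]
      simp only [Matrix.mul_assoc, hsU, Matrix.mul_one]
    have htrRC : Matrix.trace (R * C) = ∑ j, S j j * (hC.eigenvalues j : ℂ) := by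
      rw [← tr_conj' (R * C), e]
      simp [Matrix.trace, Matrix.mul_diagonal, Matrix.diag, RCLike.ofReal]
    set t : Fin N → ℝ := fun j => (S j j).re with ht
    have hre : ∀ j, (S j j : ℂ) = (t j : ℂ) := by
      intro j
      have h0 := Complex.le_def.1 (hdS0 j)
      apply Complex.ext
      · simp [ht]
      · simp [ht, ← h0.2]
    have hx' : x = ∑ j, hC.eigenvalues j * t j := by
      rw [hx, htrRC]
      rw [Complex.re_sum]
      apply Finset.sum_congr rfl
      intro j _
      rw [hre j]
      ring_nf
      simp [mul_comm]
    have hs0 : ∀ i, 0 ≤ t (σ i) := fun i => (Complex.le_def.1 (hdS0 (σ i))).1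
    have hs1 : ∀ i, t (σ i) ≤ 1 := by
      intro i
      have := Complex.le_def.1 (hdS1 (σ i))
      simpa using this.1
    have hsum : ∑ i, t (σ i) = (M : ℝ) := by
      have : ∑ i, t (σ i) = ∑ j, t j := Equiv.sum_comp σ t
      rw [this]
      have := congrArg Complex.re htrS
      rw [Complex.re_sum] at this
      simpa using this
    have := key_sum hM hMN μ (fun i => t (σ i)) hμ hs0 hs1 hsum
    rw [hx']
    calc ∑ j, hC.eigenvalues j * t j = ∑ i, μ i * t (σ i) := by
          rw [← Equiv.sum_comp σ (fun j => hC.eigenvalues j * t j)]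
          apply Finset.sum_congr rfl
          intro i _
          rw [hμσ]; rfl
      _ ≤ _ := this
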